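/- arXiv:1908.02749 — 13 statements merged into one kernel-verified Lean document; each statement's English description precedes it below -/
import Mathlib

section
/- For a triangle with side lengths a ≥ b ≥ c (a opposite the largest angle), the length t of the internal bisector of the largest angle satisfies t ≤ (√3/2)·a. -/
theorem largest_angle_bisector_length_le
    (a b c t : ℝ) (hc : 0 < c) (hcb : c ≤ b) (hba : b ≤ a)
    (htri : a < b + c) (ht0 : 0 ≤ t)
    (ht : t ^ 2 = b * c * ((b + c) ^ 2 - a ^ 2) / (b + c) ^ 2) :
    t ≤ (Real.sqrt 3 / 2) * a := by
  have hbc : (0:ℝ) < b + c := by linarith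
  have h2 : t ^ 2 ≤ 3 / 4 * a ^ 2 := by
    rw [ht, div_le_iff₀ (by positivity)]
    have hsa : (0:ℝ) ≤ (b + c) ^ 2 - a ^ 2 := by nlinarith
    have h4a : (b + c) ^ 2 ≤ 4 * a ^ 2 := by nlinarith
    nlinarith [mul_nonneg (sq_nonneg (b - c)) hsa,
      mul_nonneg (sq_nonneg (b + c)) (by linarith : (0:ℝ) ≤ 4 * a ^ 2 - (b + c) ^ 2)]
  have h3 : (Real.sqrt 3) ^ 2 = 3 := Real.sq_sqrt (by norm_num)
  nlinarith [Real.sqrt_nonneg 3, sq_nonneg (t - Real.sqrt 3 / 2 * a),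
    mul_nonneg (Real.sqrt_nonneg 3) (by linarith : (0:ℝ) ≤ a)]
end

section
/- Let α ≥ β ≥ γ > 0 with α + β + γ = π, and suppose β ≥ α/2 + γ and β ≤ π/2. Then sin((α+β+2γ)/4)·sec((α−β)/4) ≤ sin((α+2β)/4)·sec((α−2γ)/4). -/
theorem rABF_le_rACD
    (α β γ : ℝ) (hγ : 0 < γ) (hγβ : γ ≤ β) (hβα : β ≤ α)
    (hsum : α + β + γ = Real.pi)
    (hcase : α / 2 + γ ≤ β) (hβ2 : β ≤ Real.pi / 2) :
    Real.sin ((α + β + 2 * γ) / 4) / Real.cos ((α - β) / 4) ≤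
      Real.sin ((α + 2 * β) / 4) / Real.cos ((α - 2 * γ) / 4) := by
  have hπ := Real.pi_pos
  have h2γ : 2 * γ ≤ β := by linarith
  have hαπ : α < Real.pi := by linarith
  have hc1 : 0 < Real.cos ((α - β) / 4) := by
    apply Real.cos_pos_of_mem_Ioo
    constructor <;> [linarith; linarith]
  have hc2 : 0 < Real.cos ((α - 2 * γ) / 4) := by
    apply Real.cos_pos_of_mem_Ioo
    constructor <;> [linarith; linarith]
  rw [div_le_div_iff₀ hc1 hc2]
  have id : ∀ x y : ℝ, Real.sin x * Real.cos y =
      (Real.sin (x + y) + Real.sin (x - y)) / 2 := fun x y => by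
    rw [Real.sin_add, Real.sin_sub]; ring
  rw [id, id]
  have e : (α + β + 2 * γ) / 4 + (α - 2 * γ) / 4 =
      (α + 2 * β) / 4 + (α - β) / 4 := by ring
  rw [e]
  have e2 : (α + β + 2 * γ) / 4 - (α - 2 * γ) / 4 = (β + 4 * γ) / 4 := by ring
  have e3 : (α + 2 * β) / 4 - (α - β) / 4 = 3 * β / 4 := by ring
  rw [e2, e3]
  have key : Real.sin ((β + 4 * γ) / 4) ≤ Real.sin (3 * β / 4) := by
    apply Real.strictMonoOn_sin.monotoneOn
    · constructor <;> [linarith; linarith]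
    · constructor <;> [linarith; linarith]
    · linarith
  linarith
end

section
/- Let α ≥ β ≥ γ > 0 with α + β + γ = π and 2β ≥ α. Then sin((3α+2β)/8)·sec((α+2β−4γ)/8) ≤ sin((α+2β)/4)·sec((α−2γ)/4). -/
theorem rCDE_le_rACD
    (α β γ : ℝ) (hγ : 0 < γ) (hγβ : γ ≤ β) (hβα : β ≤ α)
    (hsum : α + β + γ = Real.pi) (hcase : α ≤ 2 * β) :
    Real.sin ((3 * α + 2 * β) / 8) / Real.cos ((α + 2 * β - 4 * γ) / 8) ≤
      Real.sin ((α + 2 * β) / 4) / Real.cos ((α - 2 * γ) / 4) := by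
  have hπ := Real.pi_pos
  have hα : α < Real.pi := by linarith
  have hβ : β < Real.pi := by linarith
  have hγπ : γ < Real.pi := by linarith
  have hβ0 : 0 < β := lt_of_lt_of_le hγ hγβ
  have hα0 : 0 < α := lt_of_lt_of_le hβ0 hβα
  have hc1 : 0 < Real.cos ((α + 2 * β - 4 * γ) / 8) :=
    Real.cos_pos_of_mem_Ioo ⟨by linarith, by linarith⟩
  have hc2 : 0 < Real.cos ((α - 2 * γ) / 4) :=
    Real.cos_pos_of_mem_Ioo ⟨by linarith, by linarith⟩
  rw [div_le_div_iff₀ hc1 hc2]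
  have e1 : Real.sin ((5*α+2*β-4*γ)/8) + Real.sin ((α+2*β+4*γ)/8)
      = 2 * (Real.sin ((3 * α + 2 * β) / 8) * Real.cos ((α - 2 * γ) / 4)) := by
    have h := Real.sin_add ((3*α+2*β)/8) ((α-2*γ)/4)
    have h' := Real.sin_sub ((3*α+2*β)/8) ((α-2*γ)/4)
    have ha : (3*α+2*β)/8 + (α-2*γ)/4 = (5*α+2*β-4*γ)/8 := by ring
    have hb : (3*α+2*β)/8 - (α-2*γ)/4 = (α+2*β+4*γ)/8 := by ring
    rw [ha] at h; rw [hb] at h'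
    have hc : (3*α+2*β)/8 = (3 * α + 2 * β) / 8 := by ring
    rw [hc] at h h'
    linarith
  have e2 : Real.sin ((3*α+6*β-4*γ)/8) + Real.sin ((α+2*β+4*γ)/8)
      = 2 * (Real.sin ((α + 2 * β) / 4) * Real.cos ((α + 2 * β - 4 * γ) / 8)) := by
    have h := Real.sin_add ((α+2*β)/4) ((α+2*β-4*γ)/8)
    have h' := Real.sin_sub ((α+2*β)/4) ((α+2*β-4*γ)/8)
    have ha : (α+2*β)/4 + (α+2*β-4*γ)/8 = (3*α+6*β-4*γ)/8 := by ring
    have hb : (α+2*β)/4 - (α+2*β-4*γ)/8 = (α+2*β+4*γ)/8 := by ring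
    rw [ha] at h; rw [hb] at h'
    have hc : (α+2*β)/4 = (α + 2 * β) / 4 := by ring
    have hd : (α+2*β-4*γ)/8 = (α + 2 * β - 4 * γ) / 8 := by ring
    rw [hc, hd] at h h'
    linarith
  have e4 : Real.sin ((3*α+6*β-4*γ)/8) - Real.sin ((5*α+2*β-4*γ)/8)
      = 2 * Real.sin ((2*β-α)/8) * Real.cos ((α+β-γ)/2) := by
    have h := Real.sin_sub_sin ((3*α+6*β-4*γ)/8) ((5*α+2*β-4*γ)/8)
    have ha : ((3*α+6*β-4*γ)/8 - (5*α+2*β-4*γ)/8)/2 = (2*β-α)/8 := by ring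
    have hb : ((3*α+6*β-4*γ)/8 + (5*α+2*β-4*γ)/8)/2 = (α+β-γ)/2 := by ring
    rw [ha, hb] at h
    exact h
  have hsin : 0 ≤ Real.sin ((2*β-α)/8) :=
    Real.sin_nonneg_of_nonneg_of_le_pi (by linarith) (by linarith)
  have hcos : 0 ≤ Real.cos ((α+β-γ)/2) :=
    Real.cos_nonneg_of_mem_Icc ⟨by linarith, by linarith⟩
  nlinarith [mul_nonneg hsin hcos]
end

section
/- Let α ≥ β ≥ γ > 0 with α + β + γ = π and α ≥ 2β. Then sin((3α+2β)/8)·sec((α+2β−4γ)/8) ≤ sin(α/2)·sec((β−γ)/2). -/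
theorem rCED_le_rABC
    (α β γ : ℝ) (hγ : 0 < γ) (hγβ : γ ≤ β) (hβα : β ≤ α)
    (hsum : α + β + γ = Real.pi) (hcase : 2 * β ≤ α) :
    Real.sin ((3 * α + 2 * β) / 8) / Real.cos ((α + 2 * β - 4 * γ) / 8) ≤
      Real.sin (α / 2) / Real.cos ((β - γ) / 2) := by
  have hπ : Real.pi = α + β + γ := hsum.symm
  have hα : 0 < α := lt_of_lt_of_le hγ (hγβ.trans hβα)
  have hβ : 0 < β := lt_of_lt_of_le hγ hγβ
  have e1 : (α + 2 * β - 4 * γ) / 8 = -(Real.pi / 2 - (5 * α + 6 * β) / 8) := by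
    rw [hπ]; ring
  have e2 : (β - γ) / 2 = -(Real.pi / 2 - (α + 2 * β) / 2) := by
    rw [hπ]; ring
  rw [e1, e2, Real.cos_neg, Real.cos_neg, Real.cos_pi_div_two_sub, Real.cos_pi_div_two_sub]
  have hs2 : 0 < Real.sin ((5 * α + 6 * β) / 8) := by
    apply Real.sin_pos_of_pos_of_lt_pi
    · positivity
    · rw [hπ]; linarith
  have hs4 : 0 < Real.sin ((α + 2 * β) / 2) := by
    apply Real.sin_pos_of_pos_of_lt_pi
    · positivity
    · rw [hπ]; linarith
  rw [div_le_div_iff₀ hs2 hs4]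
  have key : ∀ A B : ℝ, 2 * (Real.sin A * Real.sin B) = Real.cos (A - B) - Real.cos (A + B) := by
    intro A B; rw [Real.cos_sub, Real.cos_add]; ring
  have h1 := key ((3 * α + 2 * β) / 8) ((α + 2 * β) / 2)
  have h2 := key (α / 2) ((5 * α + 6 * β) / 8)
  rw [show (3 * α + 2 * β) / 8 - (α + 2 * β) / 2 = α / 2 - (5 * α + 6 * β) / 8 by ring,
    show (3 * α + 2 * β) / 8 + (α + 2 * β) / 2 = (7 * α + 10 * β) / 8 by ring] at h1
  rw [show α / 2 + (5 * α + 6 * β) / 8 = (9 * α + 6 * β) / 8 by ring] at h2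
  have hcos : Real.cos ((9 * α + 6 * β) / 8) ≤ Real.cos ((7 * α + 10 * β) / 8) := by
    set x := (9 * α + 6 * β) / 8 with hx
    set y := (7 * α + 10 * β) / 8 with hy
    have hy0 : 0 ≤ y := by positivity
    have hyx : y ≤ x := by rw [hx, hy]; linarith
    have hyπ : y ≤ Real.pi := by rw [hy, hπ]; linarith
    rcases le_or_gt x Real.pi with hxπ | hxπ
    · exact Real.cos_le_cos_of_nonneg_of_le_pi hy0 hxπ hyx
    · have hxy2 : x + y ≤ 2 * Real.pi := by rw [hx, hy, hπ]; linarith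
      calc Real.cos x = Real.cos (2 * Real.pi - x) := (Real.cos_two_pi_sub x).symm
        _ ≤ Real.cos y := Real.cos_le_cos_of_nonneg_of_le_pi hy0
            (by linarith) (by linarith)
  linarith [h1, h2, hcos]
end

section
/- Let α ≥ β ≥ γ > 0 with α + β + γ = π and α ≥ 2β. Then sin((3α+2γ)/8)·sec((α−4β+2γ)/8) ≤ sin(α/2)·sec((β−γ)/2). -/
theorem rBDF_le_rABC
    (α β γ : ℝ) (hγ : 0 < γ) (hγβ : γ ≤ β) (hβα : β ≤ α)
    (hsum : α + β + γ = Real.pi) (hcase : 2 * β ≤ α) :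
    Real.sin ((3 * α + 2 * γ) / 8) / Real.cos ((α - 4 * β + 2 * γ) / 8) ≤
      Real.sin (α / 2) / Real.cos ((β - γ) / 2) := by
  have hπ := Real.pi_pos
  have hβ : 0 < β := lt_of_lt_of_le hγ hγβ
  have hα : 0 < α := lt_of_lt_of_le hβ hβα
  have hαπ : α < Real.pi := by linarith
  have hβπ : β < Real.pi := by linarith
  have hγπ : γ < Real.pi := by linarith
  -- cos of the two denominators is positive
  have hC : 0 < Real.cos ((α - 4 * β + 2 * γ) / 8) := by
    apply Real.cos_pos_of_mem_Ioo
    refine Set.mem_Ioo.mpr ⟨by linarith, by linarith⟩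
  have hD : 0 < Real.cos ((β - γ) / 2) := by
    apply Real.cos_pos_of_mem_Ioo
    refine Set.mem_Ioo.mpr ⟨by linarith, by linarith⟩
  rw [div_le_div_iff₀ hC hD]
  set X := (3 * α + 2 * γ) / 8
  set Cg := (α - 4 * β + 2 * γ) / 8
  set Y := α / 2
  set D := (β - γ) / 2
  have e1 : Real.sin X * Real.cos D
      = (Real.sin (X + D) + Real.sin (X - D)) / 2 := by
    rw [Real.sin_add, Real.sin_sub]; ring
  have e2 : Real.sin Y * Real.cos Cg
      = (Real.sin (Y + Cg) + Real.sin (Y - Cg)) / 2 := by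
    rw [Real.sin_add, Real.sin_sub]; ring
  have hXD : X + D = Y - Cg := by simp only [X, D, Y, Cg]; ring
  have key : Real.sin (X - D) ≤ Real.sin (Y + Cg) := by
    have hsub := Real.sin_sub_sin (Y + Cg) (X - D)
    have h1 : 0 ≤ Real.sin ((Y + Cg - (X - D)) / 2) := by
      apply Real.sin_nonneg_of_nonneg_of_le_pi
      · simp only [X, D, Y, Cg]; linarith
      · simp only [X, D, Y, Cg]; linarith
    have h2 : 0 ≤ Real.cos ((Y + Cg + (X - D)) / 2) := by
      apply Real.cos_nonneg_of_mem_Icc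
      refine Set.mem_Icc.mpr ⟨by simp only [X, D, Y, Cg]; linarith, by simp only [X, D, Y, Cg]; linarith⟩
    nlinarith [hsub]
  rw [e1, e2, hXD]
  linarith [key]
end

section
/- Let α ≥ β ≥ γ > 0 with α + β + γ = π and 2γ ≤ α ≤ 2β. Then sin((α+4β+2γ)/8)·sec((α−2γ)/8) ≤ sin((α+2β)/4)·sec((α−2γ)/4). -/
theorem rADF_le_rACD
    (α β γ : ℝ) (hγ : 0 < γ) (hγβ : γ ≤ β) (hβα : β ≤ α)
    (hsum : α + β + γ = Real.pi) (h1 : 2 * γ ≤ α) (h2 : α ≤ 2 * β) :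
    Real.sin ((α + 4 * β + 2 * γ) / 8) / Real.cos ((α - 2 * γ) / 8) ≤
      Real.sin ((α + 2 * β) / 4) / Real.cos ((α - 2 * γ) / 4) := by
  have hπ := Real.pi_pos
  have hαπ : α < Real.pi := by linarith
  have hc1 : 0 < Real.cos ((α - 2 * γ) / 8) :=
    Real.cos_pos_of_mem_Ioo ⟨by linarith, by linarith⟩
  have hc2 : 0 < Real.cos ((α - 2 * γ) / 4) :=
    Real.cos_pos_of_mem_Ioo ⟨by linarith, by linarith⟩
  rw [div_le_div_iff₀ hc1 hc2]
  set u : ℝ := (α - 2 * γ) / 8 with hu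
  have e1 : (α + 4 * β + 2 * γ) / 8 = u + (β + γ) / 2 := by rw [hu]; ring
  have e2 : (α + 2 * β) / 4 = 2 * u + (β + γ) / 2 := by rw [hu]; ring
  have e3 : (α - 2 * γ) / 4 = 2 * u := by rw [hu]; ring
  rw [e1, e2, e3]
  have key : Real.sin (2 * u + (β + γ) / 2) * Real.cos u -
      Real.sin (u + (β + γ) / 2) * Real.cos (2 * u) =
      Real.cos ((β + γ) / 2) * Real.sin u := by
    rw [Real.sin_add, Real.sin_add, Real.sin_two_mul, Real.cos_two_mul]
    ring
  have hcv : 0 < Real.cos ((β + γ) / 2) :=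
    Real.cos_pos_of_mem_Ioo ⟨by linarith, by linarith⟩
  have hsu : 0 ≤ Real.sin u := Real.sin_nonneg_of_nonneg_of_le_pi (by rw [hu]; linarith)
    (by rw [hu]; linarith)
  nlinarith [mul_nonneg hcv.le hsu]
end

section
/- Let α ≥ β ≥ γ > 0 with α + β + γ = π and α ≤ 2γ. Then sin((α+4β+2γ)/8)·sec((α−2γ)/8) ≥ sin((α+2β+4γ)/8)·sec((α−2β)/8). -/
lemma key_prod (x : ℝ) : Real.sin (Real.pi/4 - x) * Real.cos x =
    (Real.sin (Real.pi/4) + Real.sin (Real.pi/4 - 2*x)) / 2 := by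
  rw [Real.sin_sub, Real.sin_sub, Real.cos_two_mul, Real.sin_two_mul]
  ring

theorem rADF_ge_rADE
    (α β γ : ℝ) (hγ : 0 < γ) (hγβ : γ ≤ β) (hβα : β ≤ α)
    (hsum : α + β + γ = Real.pi) (hcase : α ≤ 2 * γ) :
    Real.sin ((α + 2 * β + 4 * γ) / 8) / Real.cos ((α - 2 * β) / 8) ≤
      Real.sin ((α + 4 * β + 2 * γ) / 8) / Real.cos ((α - 2 * γ) / 8) := by
  have hπ := Real.pi_pos
  have hβlt : β < Real.pi / 2 := by linarith
  have hu1 : -(Real.pi/16) < (α - 2*β)/8 := by linarith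
  have huv : (α - 2*β)/8 ≤ (α - 2*γ)/8 := by linarith
  have hv0 : (α - 2*γ)/8 ≤ 0 := by linarith
  have hcosu : 0 < Real.cos ((α - 2*β)/8) :=
    Real.cos_pos_of_mem_Ioo ⟨by linarith, by linarith⟩
  have hcosv : 0 < Real.cos ((α - 2*γ)/8) :=
    Real.cos_pos_of_mem_Ioo ⟨by linarith, by linarith⟩
  have e1 : (α + 2*β + 4*γ)/8 = Real.pi/4 - (α - 2*γ)/8 := by linarith
  have e2 : (α + 4*β + 2*γ)/8 = Real.pi/4 - (α - 2*β)/8 := by linarith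
  rw [show (α + 2 * β + 4 * γ)/8 = (α + 2*β + 4*γ)/8 by ring,
      show (α + 4 * β + 2 * γ)/8 = (α + 4*β + 2*γ)/8 by ring, e1, e2,
      div_le_div_iff₀ hcosu hcosv, key_prod, key_prod]
  have hsin : Real.sin (Real.pi/4 - 2*((α-2*γ)/8)) ≤
      Real.sin (Real.pi/4 - 2*((α-2*β)/8)) := by
    apply Real.strictMonoOn_sin.monotoneOn ⟨by linarith, by linarith⟩
      ⟨by linarith, by linarith⟩ (by linarith)
  linarith
end

section
/- Let α ≥ β ≥ γ > 0 with α + β + γ = π and α ≤ 2γ. Then sin((α+4β+2γ)/8)·sec((α−2γ)/8) ≤ sin(54°)·sec(7.5°) < √3/2. -/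
open Real

theorem rADF_lt_sqrt3_div_two
    (α β γ : ℝ) (hγ : 0 < γ) (hγβ : γ ≤ β) (hβα : β ≤ α)
    (hsum : α + β + γ = Real.pi) (hcase : α ≤ 2 * γ) :
    Real.sin ((α + 4 * β + 2 * γ) / 8) / Real.cos ((α - 2 * γ) / 8) ≤
      Real.sin (3 * Real.pi / 10) / Real.cos (Real.pi / 24) ∧
    Real.sin (3 * Real.pi / 10) / Real.cos (Real.pi / 24) < Real.sqrt 3 / 2 := by
  have hpi := Real.pi_pos
  have hcos24 : 0 < Real.cos (Real.pi / 24) := by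
    apply Real.cos_pos_of_mem_Ioo
    constructor <;> [linarith; linarith]
  constructor
  · -- first inequality
    have hA : (α + 4 * β + 2 * γ) / 8 ≤ 3 * Real.pi / 10 := by linarith
    have hA0 : -(Real.pi/2) ≤ (α + 4 * β + 2 * γ) / 8 := by linarith
    have hsin : Real.sin ((α + 4 * β + 2 * γ) / 8) ≤ Real.sin (3 * Real.pi / 10) :=
      Real.sin_le_sin_of_le_of_le_pi_div_two hA0 (by linarith) hA
    have hγ3 : γ ≤ Real.pi / 3 := by linarith
    have hDabs : |(α - 2 * γ) / 8| ≤ Real.pi / 24 := by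
      rw [abs_le]; constructor <;> [linarith; linarith]
    have hcosD : Real.cos (Real.pi / 24) ≤ Real.cos ((α - 2 * γ) / 8) := by
      rw [← Real.cos_abs ((α - 2 * γ) / 8)]
      exact Real.cos_le_cos_of_nonneg_of_le_pi (abs_nonneg _) (by linarith) hDabs
    have hsin310 : 0 ≤ Real.sin (3 * Real.pi / 10) :=
      Real.sin_nonneg_of_nonneg_of_le_pi (by linarith) (by linarith)
    exact div_le_div₀ hsin310 hsin hcos24 hcosD
  · -- numeric bound
    have h5 : Real.sin (3 * Real.pi / 10) = Real.cos (Real.pi / 5) := by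
      rw [← Real.cos_pi_div_two_sub]; ring_nf
    have h12 : Real.cos (Real.pi / 12) = Real.sqrt 2 * (1 + Real.sqrt 3) / 4 := by
      rw [show (Real.pi / 12 : ℝ) = Real.pi / 3 - Real.pi / 4 by ring, Real.cos_sub,
        Real.cos_pi_div_three, Real.sin_pi_div_three, Real.cos_pi_div_four,
        Real.sin_pi_div_four]
      ring
    have hlt : Real.cos (Real.pi / 12) < Real.cos (Real.pi / 24) :=
      Real.cos_lt_cos_of_nonneg_of_le_pi (by positivity) (by linarith) (by linarith)
    have s2 : Real.sqrt 2 ^ 2 = 2 := Real.sq_sqrt (by norm_num)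
    have s3 : Real.sqrt 3 ^ 2 = 3 := Real.sq_sqrt (by norm_num)
    have s5 : Real.sqrt 5 ^ 2 = 5 := Real.sq_sqrt (by norm_num)
    have s2' : (1.414 : ℝ) < Real.sqrt 2 := by
      nlinarith [Real.sqrt_nonneg 2]
    have s3' : (1.732 : ℝ) < Real.sqrt 3 := by
      nlinarith [Real.sqrt_nonneg 3]
    have s5' : Real.sqrt 5 < 2.2361 := by
      nlinarith [Real.sqrt_nonneg 5]
    have hkey : Real.cos (Real.pi / 5) < Real.sqrt 3 / 2 * Real.cos (Real.pi / 24) := by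
      rw [Real.cos_pi_div_five]
      calc (1 + Real.sqrt 5) / 4 < Real.sqrt 3 / 2 * Real.cos (Real.pi / 12) := by
            rw [h12]; nlinarith [Real.sqrt_nonneg 2, Real.sqrt_nonneg 3]
        _ < Real.sqrt 3 / 2 * Real.cos (Real.pi / 24) := by
            have h3pos : 0 < Real.sqrt 3 := by positivity
            nlinarith
    rw [h5, div_lt_iff₀ hcos24]
    linarith
end

section
/- Let α ≥ β ≥ γ > 0 with α + β + γ = π and β ≥ α/2 + γ. Then sin((α+2β)/4)·sec((α−2γ)/4) ≥ sin((α+2γ)/4)·sec((α−2β)/4). -/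
/-! Clearing the (positive) denominators and expanding both products by
`2 sin x cos y = sin (x - y) + sin (x + y)` turns the inequality into
`sin (α / 2) + sin γ ≤ sin (α / 2) + sin β`, and `sin γ ≤ sin β` holds because
`0 < γ ≤ β` and `β + γ < π`. -/

open Real

theorem sin_le_sin_of_le_of_add_le_pi {x y : ℝ} (hx : 0 ≤ x) (hxy : x ≤ y) (hsum : x + y ≤ π) :
    sin x ≤ sin y := by
  have hsin : 0 ≤ sin ((y - x) / 2) := sin_nonneg_of_nonneg_of_le_pi (by linarith) (by linarith)
  have hcos : 0 ≤ cos ((y + x) / 2) := cos_nonneg_of_mem_Icc ⟨by linarith, by linarith⟩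
  have hdiff : 0 ≤ sin y - sin x := by
    rw [sin_sub_sin]
    positivity
  linarith

theorem two_mul_sin_mul_cos_quarter (a c : ℝ) :
    2 * sin ((a + 2 * c) / 4) * cos ((a - 2 * c) / 4) = sin c + sin (a / 2) := by
  rw [two_mul_sin_mul_cos]
  ring_nf

theorem sin_div_cos_quarter_le {a b c : ℝ} (hb : 0 < cos ((a - 2 * b) / 4))
    (hc : 0 < cos ((a - 2 * c) / 4)) (hsin : sin c ≤ sin b) :
    sin ((a + 2 * c) / 4) / cos ((a - 2 * b) / 4) ≤
      sin ((a + 2 * b) / 4) / cos ((a - 2 * c) / 4) := by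
  rw [div_le_div_iff₀ hb hc]
  linarith [two_mul_sin_mul_cos_quarter a b, two_mul_sin_mul_cos_quarter a c]

theorem rACD_ge_rBCD_case1_general
    (α β γ : ℝ) (hγ : 0 < γ) (hγβ : γ ≤ β) (hβα : β ≤ α)
    (hsum : α + β + γ = Real.pi) :
    Real.sin ((α + 2 * γ) / 4) / Real.cos ((α - 2 * β) / 4) ≤
      Real.sin ((α + 2 * β) / 4) / Real.cos ((α - 2 * γ) / 4) := by
  have hβ : 0 < β := hγ.trans_le hγβ
  have hα : 0 < α := hβ.trans_le hβα
  apply sin_div_cos_quarter_le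
  · exact cos_pos_of_mem_Ioo ⟨by linarith [pi_pos], by linarith [pi_pos]⟩
  · exact cos_pos_of_mem_Ioo ⟨by linarith [pi_pos], by linarith [pi_pos]⟩
  · exact sin_le_sin_of_le_of_add_le_pi hγ.le hγβ (by linarith)

theorem rACD_ge_rBCD_case1
    (α β γ : ℝ) (hγ : 0 < γ) (hγβ : γ ≤ β) (hβα : β ≤ α)
    (hsum : α + β + γ = Real.pi) (hcase : α / 2 + γ ≤ β) :
    Real.sin ((α + 2 * γ) / 4) / Real.cos ((α - 2 * β) / 4) ≤
      Real.sin ((α + 2 * β) / 4) / Real.cos ((α - 2 * γ) / 4) :=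
  rACD_ge_rBCD_case1_general α β γ hγ hγβ hβα hsum
end

section
/- Let α ≥ β ≥ γ > 0 with α + β + γ = π and β ≤ α/2 + γ. Then sin((α+2β)/4)·sec((α−2γ)/4) ≥ sin(β/2)·sec(γ/2). -/
theorem rACD_ge_rBCD_case2
    (α β γ : ℝ) (hγ : 0 < γ) (hγβ : γ ≤ β) (hβα : β ≤ α)
    (hsum : α + β + γ = Real.pi) (hcase : β ≤ α / 2 + γ) :
    Real.sin (β / 2) / Real.cos (γ / 2) ≤
      Real.sin ((α + 2 * β) / 4) / Real.cos ((α - 2 * γ) / 4) := by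
  have hπ := Real.pi_pos
  have hγ3 : γ ≤ Real.pi / 3 := by linarith
  have hc1 : 0 < Real.cos (γ / 2) :=
    Real.cos_pos_of_mem_Ioo ⟨by linarith, by linarith⟩
  have hc2 : 0 < Real.cos ((α - 2 * γ) / 4) :=
    Real.cos_pos_of_mem_Ioo ⟨by linarith, by linarith⟩
  rw [div_le_div_iff₀ hc1 hc2]
  have key : Real.sin ((2 * β + 2 * γ - α) / 4) ≤ Real.sin ((α + 2 * β + 2 * γ) / 4) := by
    apply Real.strictMonoOn_sin.monotoneOn ⟨by linarith, by linarith⟩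
      ⟨by linarith, by linarith⟩ (by linarith)
  have h1 : Real.sin ((α + 2 * β - 2 * γ) / 4) + Real.sin ((2 * β + 2 * γ - α) / 4)
      = 2 * Real.sin (β / 2) * Real.cos ((α - 2 * γ) / 4) := by
    have e1 : (α + 2 * β - 2 * γ) / 4 = β / 2 + (α - 2 * γ) / 4 := by ring
    have e2 : (2 * β + 2 * γ - α) / 4 = β / 2 - (α - 2 * γ) / 4 := by ring
    rw [e1, e2, Real.sin_add, Real.sin_sub]; ring
  have h2 : Real.sin ((α + 2 * β + 2 * γ) / 4) + Real.sin ((α + 2 * β - 2 * γ) / 4)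
      = 2 * Real.sin ((α + 2 * β) / 4) * Real.cos (γ / 2) := by
    have e1 : (α + 2 * β + 2 * γ) / 4 = (α + 2 * β) / 4 + γ / 2 := by ring
    have e2 : (α + 2 * β - 2 * γ) / 4 = (α + 2 * β) / 4 - γ / 2 := by ring
    rw [e1, e2, Real.sin_add, Real.sin_sub]; ring
  linarith
end

section
/- Let α ≥ β ≥ γ > 0 with α + β + γ = π, and define θ_n = (j_{n+1}/2^n)α + (j_n/2^{n−1})β and φ_n = (j_n/2^n)α + (j_{n−1}/2^{n−1})β. Then for every n ≥ 1, θ_n ≥ φ_n and θ_n ≥ γ. -/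
def jacobsthal : ℕ → ℤ
  | 0 => 0
  | 1 => 1
  | (n + 2) => jacobsthal (n + 1) + 2 * jacobsthal n

theorem jac_nonneg : ∀ n, 0 ≤ jacobsthal n
  | 0 => le_refl 0
  | 1 => by norm_num [jacobsthal]
  | (n + 2) => by
      have h1 := jac_nonneg n
      have h2 := jac_nonneg (n + 1)
      show (0 : ℤ) ≤ jacobsthal (n + 1) + 2 * jacobsthal n
      linarith

theorem jac_mono : ∀ n, jacobsthal n ≤ jacobsthal (n + 1)
  | 0 => by norm_num [jacobsthal]
  | (n + 1) => by
      have h1 := jac_nonneg n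
      show jacobsthal (n + 1) ≤ jacobsthal (n + 1) + 2 * jacobsthal n
      linarith

theorem jac_ge : ∀ n, (2 : ℤ) ^ n ≤ jacobsthal (n + 2)
  | 0 => by norm_num [jacobsthal]
  | 1 => by norm_num [jacobsthal]
  | (n + 2) => by
      have h1 := jac_ge n
      have h2 := jac_ge (n + 1)
      show (2 : ℤ) ^ (n + 2) ≤ jacobsthal (n + 3) + 2 * jacobsthal (n + 2)
      have : (2 : ℤ) ^ (n + 2) = 2 ^ (n + 1) + 2 * 2 ^ n := by ring
      linarith

noncomputable def theta (α β : ℝ) (n : ℕ) : ℝ :=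
  (jacobsthal (n + 1) : ℝ) / 2 ^ n * α + (jacobsthal n : ℝ) / 2 ^ (n - 1) * β

noncomputable def phi (α β : ℝ) (n : ℕ) : ℝ :=
  (jacobsthal n : ℝ) / 2 ^ n * α + (jacobsthal (n - 1) : ℝ) / 2 ^ (n - 1) * β

theorem theta_ge_phi_and_gamma
    (α β γ : ℝ) (hγ : 0 < γ) (hγβ : γ ≤ β) (hβα : β ≤ α)
    (hsum : α + β + γ = Real.pi) (n : ℕ) (hn : 1 ≤ n) :
    phi α β n ≤ theta α β n ∧ γ ≤ theta α β n := by
  obtain ⟨m, rfl⟩ : ∃ m, n = m + 1 := ⟨n - 1, (Nat.succ_pred_eq_of_pos hn).symm⟩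
  have hβ : 0 < β := lt_of_lt_of_le hγ hγβ
  have hα : 0 < α := lt_of_lt_of_le hβ hβα
  have h2m : (0 : ℝ) < 2 ^ m := by positivity
  have h2m1 : (0 : ℝ) < 2 ^ (m + 1) := by positivity
  have hc1 : (0 : ℝ) ≤ (jacobsthal (m + 2) : ℝ) := by exact_mod_cast jac_nonneg (m + 2)
  have hc2 : (0 : ℝ) ≤ (jacobsthal (m + 1) : ℝ) := by exact_mod_cast jac_nonneg (m + 1)
  have hmono1 : (jacobsthal (m + 1) : ℝ) ≤ (jacobsthal (m + 2) : ℝ) := by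
    exact_mod_cast jac_mono (m + 1)
  have hmono0 : (jacobsthal m : ℝ) ≤ (jacobsthal (m + 1) : ℝ) := by
    exact_mod_cast jac_mono m
  have hge : (2 : ℝ) ^ (m + 1) ≤ (jacobsthal (m + 2) : ℝ) + 2 * (jacobsthal (m + 1) : ℝ) := by
    have := jac_ge (m + 1)
    have h3 : jacobsthal (m + 3) = jacobsthal (m + 2) + 2 * jacobsthal (m + 1) := rfl
    rw [h3] at this
    exact_mod_cast this
  constructor
  · unfold theta phi
    simp only [Nat.add_sub_cancel]
    gcongr
  · unfold theta
    simp only [Nat.add_sub_cancel]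
    have heq : (jacobsthal (m + 2) : ℝ) / 2 ^ (m + 1) * α + (jacobsthal (m + 1) : ℝ) / 2 ^ m * β
        = ((jacobsthal (m + 2) : ℝ) * α + 2 * (jacobsthal (m + 1) : ℝ) * β) / 2 ^ (m + 1) := by
      field_simp
      ring
    rw [heq, le_div_iff₀ h2m1]
    nlinarith [mul_le_mul_of_nonneg_left (hγβ.trans hβα) hc1,
      mul_le_mul_of_nonneg_left hγβ hc2]
end

section
/- Let α, β be positive reals with α ≠ 2β, and let θ_n = (j_{n+1}/2^n)·α + (j_n/2^{n−1})·β where j is the Jacobsthal sequence. Then θ_p ≠ θ_q whenever p ≠ q (p, q ≥ 1). Consequently the map n ↦ θ_n is injective. -/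
lemma jac3 : ∀ n : ℕ, 3 * jacobsthal n = 2 ^ n - (-1) ^ n
  | 0 => by simp [jacobsthal]
  | 1 => by simp [jacobsthal]
  | (n + 2) => by
    have h1 := jac3 (n + 1)
    have h2 := jac3 n
    simp only [jacobsthal]
    ring_nf
    ring_nf at h1 h2
    linarith

lemma jacR (n : ℕ) : (jacobsthal n : ℝ) = (2 ^ n - (-1) ^ n) / 3 := by
  have := jac3 n
  have : (3 : ℝ) * (jacobsthal n : ℝ) = 2 ^ n - (-1) ^ n := by
    exact_mod_cast congrArg (Int.cast : ℤ → ℝ) this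
  linarith

lemma theta_eq (α β : ℝ) (m : ℕ) :
    theta α β (m + 1) = (2 * α + 2 * β) / 3 + (-1) ^ (m + 1) / 2 ^ (m + 1) * (α - 2 * β) / 3 := by
  unfold theta
  rw [jacR, jacR]
  have h2 : (2 : ℝ) ^ m ≠ 0 := by positivity
  simp only [Nat.add_sub_cancel]
  field_simp
  ring

theorem theta_injective
    (α β : ℝ) (hα : 0 < α) (hβ : 0 < β) (hne : α ≠ 2 * β) :
    (∀ p q : ℕ, 1 ≤ p → 1 ≤ q → p ≠ q → theta α β p ≠ theta α β q) ∧
      Function.Injective (fun n : ℕ => theta α β (n + 1)) := by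
  have key : ∀ p q : ℕ, 1 ≤ p → 1 ≤ q → p ≠ q → theta α β p ≠ theta α β q := by
    intro p q hp hq hpq h
    obtain ⟨a, rfl⟩ := Nat.exists_eq_add_of_le hp
    obtain ⟨b, rfl⟩ := Nat.exists_eq_add_of_le hq
    rw [add_comm 1 a, add_comm 1 b] at *
    rw [theta_eq, theta_eq] at h
    have hc : α - 2 * β ≠ 0 := sub_ne_zero.mpr hne
    have heq : (-1 : ℝ) ^ (a + 1) / 2 ^ (a + 1) = (-1) ^ (b + 1) / 2 ^ (b + 1) := by
      have := h
      field_simp at this ⊢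
      rcases mul_eq_mul_right_iff.mp (by linarith : (-1 : ℝ) ^ (a + 1) * 2 ^ (b + 1) * (α - 2 * β) = (-1) ^ (b + 1) * 2 ^ (a + 1) * (α - 2 * β)) with h' | h'
      · linarith
      · exact absurd h' hc
    have habs : |(-1 : ℝ) ^ (a + 1) / 2 ^ (a + 1)| = |(-1 : ℝ) ^ (b + 1) / 2 ^ (b + 1)| := by
      rw [heq]
    simp [abs_div, abs_pow] at habs
    exact hpq (by omega)
  refine ⟨key, ?_⟩
  intro a b h
  by_contra hab
  exact key (a + 1) (b + 1) (by omega) (by omega) (by omega) h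
end

section
/- The only triangle with angles α ≥ β ≥ γ, α + β + γ = π, such that α = 2β and additionally the isosceles child triangle (β, β, π−2β) also has its largest angle equal to twice its middle angle, is the isosceles right triangle (π/2, π/4, π/4). -/
theorem only_isosceles_right
    (α β γ : ℝ) (hγ : 0 < γ) (hγβ : γ ≤ β) (hβα : β ≤ α)
    (hsum : α + β + γ = Real.pi) (hαβ : α = 2 * β)
    (hchild : β = 2 * (Real.pi - 2 * β) ∨ Real.pi - 2 * β = 2 * β) :
    α = Real.pi / 2 ∧ β = Real.pi / 4 ∧ γ = Real.pi / 4 := by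
  have hpi := Real.pi_pos
  rcases hchild with h | h
  · exfalso; linarith
  · refine ⟨by linarith, by linarith, by linarith⟩
end
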